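/- Velocity gradient of the shock function. Let γ > 1, h(s) := ((γ−1)s/γ)^{1/(γ−1)} for s > 0, c(ρ) := √(γρ^{γ−1}). Fix v^I ∈ ℝ², ρ^I ∈ ℝ, a ∈ ℝ, ψ^I(ξ) := a + v^I·ξ, and define for v ≠ v^I: g(v,ξ) := (h(−ψ^I(ξ) + v·ξ − ½|v|²)·(v−ξ) − ρ^I·(v^I−ξ)) · (v^I−v)/|v^I−v|. Let ξ ∈ ℝ² and v₀ ∈ ℝ² with v₀ ≠ v^I and −ψ^I(ξ) + v₀·ξ − ½|v₀|² > 0. Set ρ := h(−ψ^I(ξ) + v₀·ξ − ½|v₀|²), c := c(ρ), z := v₀ − ξ, n := (v^I − v₀)/|v^I − v₀|, and t := n rotated by 90° counterclockwise. Then v ↦ g(v,ξ) is differentiable at v₀ with gradient ∇_v g(v₀,ξ) = ρ(I − z⊗z/c²)·n − ((ρ·z − ρ^I·(v^I−ξ))·t / |v^I − v₀|)·t. -/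

import Mathlib

open InnerProductSpace

noncomputable section

abbrev E2 : Type := EuclideanSpace ℝ (Fin 2)

def vec2 (a b : ℝ) : E2 := (WithLp.equiv 2 (Fin 2 → ℝ)).symm ![a, b]

/-- Rotation by 90° counterclockwise. -/
def rot90 (v : E2) : E2 := vec2 (-(v 1)) (v 0)

/-- h(s) = ((γ−1)s/γ)^(1/(γ−1)), the inverse of π(ρ) = γρ^(γ−1)/(γ−1). -/
def hFun (γ s : ℝ) : ℝ := ((γ - 1) * s / γ) ^ (1 / (γ - 1))

/-- Sound speed c(ρ) = √(γρ^(γ−1)). -/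
def soundSpeed (γ ρ : ℝ) : ℝ := Real.sqrt (γ * ρ ^ (γ - 1))

/-- The shock function g(v,ξ). -/
def gFun (γ : ℝ) (vI : E2) (ρI a : ℝ) (v ξ : E2) : ℝ :=
  ⟪hFun γ (-(a + ⟪vI, ξ⟫_ℝ) + ⟪v, ξ⟫_ℝ - ‖v‖ ^ 2 / 2) • (v - ξ) - ρI • (vI - ξ),
    ‖vI - v‖⁻¹ • (vI - v)⟫_ℝ


/-
Write g(·, ξ) = ⟪F, N⟫ with mass flux F(v) = h(s(v))(v − ξ) − ρ^I(v^I − ξ), where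
s(v) = −ψ^I(ξ) + v·ξ − ½|v|², and unit normal N(v) = (v^I − v)/|v^I − v|. Since ∇s = ξ − v and
h' = h/c(h)², the Jacobian DF(v₀) = ρ(I − z⊗z/c²) is symmetric; and DN(v₀) = −(I − n⊗n)/|v^I − v₀|,
where in the plane I − n⊗n = t⊗t. The product rule ∇⟪F, N⟫ = DFᵀN + DNᵀF gives the gradient.
-/

section InnerProductSpace

variable {F : Type*} [NormedAddCommGroup F] [InnerProductSpace ℝ F]

theorem hasFDerivAt_norm_of_ne_zero {u : F} (hu : u ≠ 0) :
    HasFDerivAt (‖·‖) (‖u‖⁻¹ • innerSL ℝ u) u := by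
  have hsqrt : HasDerivAt Real.sqrt (1 / (2 * ‖u‖)) (‖u‖ ^ 2) := by
    simpa [Real.sqrt_sq (norm_nonneg u)] using
      Real.hasDerivAt_sqrt (pow_pos (norm_pos_iff.mpr hu) 2).ne'
  refine (hsqrt.comp_hasFDerivAt u (hasStrictFDerivAt_norm_sq u).hasFDerivAt)
    |>.congr_of_eventuallyEq (.of_forall fun v => (Real.sqrt_sq (norm_nonneg v)).symm)
    |>.congr_fderiv ?_
  ext w
  simp only [smul_apply, coe_innerSL_apply, nsmul_eq_mul, Nat.cast_ofNat, smul_eq_mul]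
  field_simp

theorem hasFDerivAt_inv_norm_smul {u : F} (hu : u ≠ 0) :
    HasFDerivAt (fun v : F => ‖v‖⁻¹ • v)
      (‖u‖⁻¹ • (ContinuousLinearMap.id ℝ F -
        (innerSL ℝ (‖u‖⁻¹ • u)).smulRight (‖u‖⁻¹ • u))) u := by
  have hinv := (hasDerivAt_inv (norm_ne_zero_iff.mpr hu)).comp_hasFDerivAt u
    (hasFDerivAt_norm_of_ne_zero hu)
  refine (hinv.smul (hasFDerivAt_id u)).congr_fderiv ?_
  ext w
  simp only [Function.comp_apply, add_apply, sub_apply, smul_apply, id_eq,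
    ContinuousLinearMap.id_apply, ContinuousLinearMap.smulRight_apply, coe_innerSL_apply,
    inner_smul_left, RCLike.conj_to_real, smul_eq_mul]
  module

theorem hasFDerivAt_const_add_inner_sub_norm_sq_div_two (C : ℝ) (ξ v₀ : F) :
    HasFDerivAt (fun v : F => C + ⟪v, ξ⟫_ℝ - ‖v‖ ^ 2 / 2)
      (innerSL ℝ (ξ - v₀)) v₀ := by
  have hlin : HasFDerivAt (fun v : F => ⟪v, ξ⟫_ℝ) (innerSL ℝ ξ) v₀ :=
    (innerSL ℝ ξ).hasFDerivAt.congr_of_eventuallyEq (.of_forall fun v => real_inner_comm ξ v)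
  have hsq := (hasStrictFDerivAt_norm_sq v₀).hasFDerivAt.mul_const (1 / 2 : ℝ)
  refine ((hlin.const_add C).sub hsq).congr_of_eventuallyEq
    (.of_forall fun v => by simp only [Pi.sub_apply]; ring) |>.congr_fderiv ?_
  ext w
  simp

theorem HasDerivAt.hasFDerivAt_comp_smul_sub {φ : ℝ → ℝ} {φ' C : ℝ} {ξ v₀ : F}
    (hφ : HasDerivAt φ φ' (C + ⟪v₀, ξ⟫_ℝ - ‖v₀‖ ^ 2 / 2)) :
    HasFDerivAt (fun v : F => φ (C + ⟪v, ξ⟫_ℝ - ‖v‖ ^ 2 / 2) • (v - ξ))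
      (φ (C + ⟪v₀, ξ⟫_ℝ - ‖v₀‖ ^ 2 / 2) • ContinuousLinearMap.id ℝ F -
        φ' • (innerSL ℝ (v₀ - ξ)).smulRight (v₀ - ξ)) v₀ := by
  have hdens :=
    hφ.comp_hasFDerivAt v₀ (hasFDerivAt_const_add_inner_sub_norm_sq_div_two C ξ v₀)
  refine (hdens.smul ((hasFDerivAt_id v₀).sub_const ξ)).congr_fderiv ?_
  ext w
  simp only [Function.comp_apply, add_apply, sub_apply, smul_apply, id_eq,
    ContinuousLinearMap.id_apply, ContinuousLinearMap.smulRight_apply, coe_innerSL_apply,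
    inner_sub_left, smul_eq_mul]
  module

theorem HasFDerivAt.hasGradientAt_inner [CompleteSpace F] {f g : F → F} {f' g' : F →L[ℝ] F}
    {x p : F} (hf : HasFDerivAt f f' x) (hg : HasFDerivAt g g' x)
    (hp : ∀ w, ⟪f x, g' w⟫_ℝ + ⟪f' w, g x⟫_ℝ = ⟪p, w⟫_ℝ) :
    HasGradientAt (fun v => ⟪f v, g v⟫_ℝ) p x :=
  hasGradientAt_iff_hasFDerivAt.mpr <| (hf.inner ℝ hg).congr_fderiv <| by
    ext w
    simpa using hp w

end InnerProductSpace

theorem soundSpeed_hFun_sq {γ s : ℝ} (hγ : 1 < γ) (hs : 0 ≤ s) :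
    soundSpeed γ (hFun γ s) ^ 2 = (γ - 1) * s := by
  have hγ1 : 0 < γ - 1 := by linarith
  have hu : 0 ≤ (γ - 1) * s / γ := by positivity
  rw [soundSpeed, Real.sq_sqrt (by unfold hFun; positivity), hFun, ← Real.rpow_mul hu,
    one_div_mul_cancel hγ1.ne', Real.rpow_one]
  field_simp

theorem hasDerivAt_hFun {γ s : ℝ} (hγ : 1 < γ) (hs : 0 < s) :
    HasDerivAt (hFun γ) (hFun γ s / soundSpeed γ (hFun γ s) ^ 2) s := by
  have hγ1 : 0 < γ - 1 := by linarith
  have hu : 0 < (γ - 1) * s / γ := by positivity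
  have hlin : HasDerivAt (fun s => (γ - 1) * s / γ) ((γ - 1) / γ) s := by
    simpa using ((hasDerivAt_id s).const_mul (γ - 1)).div_const γ
  refine ((Real.hasDerivAt_rpow_const (Or.inl hu.ne')).comp s hlin).congr_deriv ?_
  rw [soundSpeed_hFun_sq hγ hs.le, hFun, Real.rpow_sub hu, Real.rpow_one]
  field_simp

theorem sub_inner_smul_eq_inner_rot90_smul {n : E2} (hn : ‖n‖ = 1) (w : E2) :
    w - ⟪n, w⟫_ℝ • n = ⟪rot90 n, w⟫_ℝ • rot90 n := by
  have hn2 : n 0 ^ 2 + n 1 ^ 2 = 1 := by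
    simpa [EuclideanSpace.norm_eq, Fin.sum_univ_two, Real.sqrt_eq_one] using hn
  ext i
  fin_cases i <;>
    simp only [rot90, vec2, WithLp.equiv_symm_apply, PiLp.inner_apply, RCLike.inner_apply,
      Real.ringHom_apply, Fin.sum_univ_two, Fin.isValue, Fin.zero_eta, Fin.mk_one, PiLp.sub_apply,
      PiLp.smul_apply, smul_eq_mul, Matrix.cons_val_zero, Matrix.cons_val_one,
      Matrix.cons_val_fin_one, mul_neg] <;>
    linear_combination (-w _) * hn2

theorem shock_function_velocity_gradient (γ : ℝ) (hγ : 1 < γ)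
    (vI : E2) (ρI a : ℝ) (ξ v₀ : E2) (hne : v₀ ≠ vI)
    (s₀ : ℝ) (hs₀ : s₀ = -(a + ⟪vI, ξ⟫_ℝ) + ⟪v₀, ξ⟫_ℝ - ‖v₀‖ ^ 2 / 2)
    (hs₀pos : 0 < s₀)
    (ρ c : ℝ) (hρ : ρ = hFun γ s₀) (hc : c = soundSpeed γ ρ)
    (z nv tv : E2) (hz : z = v₀ - ξ)
    (hn : nv = ‖vI - v₀‖⁻¹ • (vI - v₀)) (ht : tv = rot90 nv) :
    HasGradientAt (fun v => gFun γ vI ρI a v ξ)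
      (ρ • (nv - (⟪z, nv⟫_ℝ / c ^ 2) • z) -
        (⟪ρ • z - ρI • (vI - ξ), tv⟫_ℝ / ‖vI - v₀‖) • tv) v₀ := by
  have hu : vI - v₀ ≠ 0 := sub_ne_zero.mpr hne.symm
  have hnv : ‖nv‖ = 1 := hn ▸ norm_smul_inv_norm hu
  have hdens : HasDerivAt (hFun γ) (ρ / c ^ 2) s₀ := hc ▸ hρ ▸ hasDerivAt_hFun hγ hs₀pos
  subst hs₀
  have hflux := (hdens.hasFDerivAt_comp_smul_sub (F := E2)).sub_const (ρI • (vI - ξ))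
  rw [← hρ, ← hz] at hflux
  have hnormal := (hasFDerivAt_inv_norm_smul hu).comp v₀ ((hasFDerivAt_id v₀).const_sub vI)
  rw [← hn] at hnormal
  refine hflux.hasGradientAt_inner hnormal fun w => ?_
  simp only [sub_apply, smul_apply, neg_apply, ContinuousLinearMap.id_apply,
    ContinuousLinearMap.comp_apply, ContinuousLinearMap.smulRight_apply, innerSL_apply_apply]
  rw [← hρ, ← hn, ← hz, sub_inner_smul_eq_inner_rot90_smul hnv, ← ht]
  simp only [inner_sub_left, inner_sub_right, inner_smul_left, inner_smul_right, inner_neg_right,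
    real_inner_comm w, RCLike.conj_to_real]
  ring

end
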